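/- Let X be a compact metric space. If f : P(X) → ℝ is such that there exist, for every ε > 0, a constant B ≥ 0 and sequences f_M (symmetric continuous functions on X^M) and f̂_M ∈ H_{k_M} with: f_M → f in mean field, ‖f_M − f̂_M‖_∞ ≤ ε for all M, and ‖f̂_M‖_{k_M} ≤ B for all M — then for every ε > 0 there exists f̂ ∈ H_k with ‖f − f̂‖_∞ ≤ ε, where H_k is the RKHS of the mean field limit kernel k. -/

import Mathlib

open MeasureTheory Filter
open scoped ENNReal RealInnerProductSpace

/-- Kantorovich–Rubinstein metric: `d_KR(μ,ν) = sup{∫φ dμ − ∫φ dν : φ 1-Lipschitz}`. -/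
noncomputable def dKR {X : Type*} [MeasurableSpace X] [MetricSpace X] (μ ν : Measure X) : ℝ :=
  ⨆ φ : {f : X → ℝ // LipschitzWith 1 f}, (∫ x, φ.1 x ∂μ - ∫ x, φ.1 x ∂ν)

noncomputable def empMeasure {X : Type*} [MeasurableSpace X] {M : ℕ} (x : Fin M → X) : Measure X :=
  ((M : ℝ≥0∞)⁻¹) • ∑ i, Measure.dirac (x i)

theorem empMeasure_prob {X : Type*} [MeasurableSpace X] {M : ℕ} (x : Fin (M + 1) → X) :
    IsProbabilityMeasure (empMeasure x) := by
  constructor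
  simp only [empMeasure, Measure.smul_apply, smul_eq_mul]
  rw [Measure.coe_finset_sum]
  simp only [Finset.sum_apply, measure_univ, Finset.sum_const, Finset.card_univ,
    Fintype.card_fin, nsmul_eq_mul, mul_one]
  exact ENNReal.inv_mul_cancel (by exact_mod_cast Nat.succ_ne_zero M) (by simp)

noncomputable def empProb {X : Type*} [MeasurableSpace X] {M : ℕ} (x : Fin (M + 1) → X) :
    ProbabilityMeasure X :=
  ⟨empMeasure x, empMeasure_prob x⟩

/-!
Every `μ ∈ P(X)` is the `d_KR`-limit of empirical measures `μ̂[x_M(μ)]`: quantize `μ` on a finite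
`ρ`-net and round its weights to multiples of `1/(M+1)`. Fix `ε`, and `B`, `f_M`, `f̂_M` as in the
hypothesis. Along a free ultrafilter on `ℕ` the numbers `⟪f̂_M, Φ_M(x_M(μ))⟫`, which stay close to
`f_M(x_M(μ)) → f(μ)`, converge to some `a(μ)` with `|a(μ) - f(μ)| ≤ ε`. Mean field convergence of
the kernels makes the Gram matrices of the vectors `Φ_M(x_M(μ))` converge to those of the `Φ(μ)`,
so `‖f̂_M‖ ≤ B` gives `|∑ c_μ a(μ)| ≤ B ‖∑ c_μ Φ(μ)‖`. By Hahn–Banach and Riesz this functional is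
`⟪g, ·⟫` for some `g ∈ H_k`, i.e. `⟪g, Φ(μ)⟫ = a(μ)`.
-/

open Set Metric
open scoped Topology NNReal

attribute [local instance] empMeasure_prob

lemma exists_tendsto_zero_of_eventually_exists_le {α : ℕ → Type*} [∀ n, Nonempty (α n)]
    (F : ∀ n, α n → ℝ) (hF : ∀ n a, 0 ≤ F n a) (h : ∀ δ > 0, ∀ᶠ n in atTop, ∃ a, F n a ≤ δ) :
    ∃ s : ∀ n, α n, Tendsto (fun n => F n (s n)) atTop (𝓝 0) := by
  have hbdd : ∀ n, BddBelow (range (F n)) := fun n => ⟨0, by rintro _ ⟨a, rfl⟩; exact hF n a⟩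
  have hinf : Tendsto (fun n => ⨅ a, F n a) atTop (𝓝 0) := by
    refine tendsto_order.2 ⟨fun b hb => .of_forall fun n => hb.trans_le (le_ciInf (hF n)),
      fun b hb => ?_⟩
    filter_upwards [h (b / 2) (half_pos hb)] with n ⟨a, ha⟩
    exact (ciInf_le (hbdd n) a).trans_lt (ha.trans_lt (half_lt_self hb))
  choose s hs using fun n : ℕ => exists_lt_of_ciInf_lt
    (lt_add_of_pos_right (⨅ a, F n a) (Nat.one_div_pos_of_nat (n := n)))
  refine ⟨s, squeeze_zero (fun n => hF n (s n)) (fun n => (hs n).le) ?_⟩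
  simpa using hinf.add tendsto_one_div_add_atTop_nhds_zero_nat

lemma exists_tendsto_ultrafilter_abs_sub_le {γ : Type*} {l : Filter γ} {U : Ultrafilter γ}
    (hU : ↑U ≤ l) {u v : γ → ℝ} {y ε : ℝ} (hv : Tendsto v l (𝓝 y))
    (huv : ∀ δ > 0, ∀ᶠ n in l, |u n - v n| ≤ ε + δ) :
    ∃ a, Tendsto u U (𝓝 a) ∧ |a - y| ≤ ε := by
  have hbdd : ∀ᶠ n in (U : Filter γ), u n ∈ closedBall y (ε + 2) := hU <| by
    filter_upwards [huv 1 one_pos, hv.eventually (closedBall_mem_nhds y one_pos)] with n h1 h2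
    rw [mem_closedBall, Real.dist_eq] at *
    linarith [abs_sub_le (u n) (v n) y]
  obtain ⟨a, -, ha⟩ := (isCompact_closedBall y (ε + 2)).ultrafilter_le_nhds (U.map u)
    (by rw [Ultrafilter.coe_map]; exact le_principal_iff.2 hbdd)
  replace ha : Tendsto u U (𝓝 a) := by rwa [Ultrafilter.coe_map] at ha
  exact ⟨a, ha, le_of_forall_pos_le_add fun δ hδ =>
    le_of_tendsto (ha.sub (hv.mono_left hU)).abs (hU (huv δ hδ))⟩

lemma Fintype.exists_sum_comp_eq_sum_nsmul {ι M : Type*} [Fintype ι] [AddCommMonoid M]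
    (c : ι → ℕ) : ∃ ℓ : Fin (∑ i, c i) → ι, ∀ g : ι → M, ∑ j, g (ℓ j) = ∑ i, c i • g i := by
  let e := Fintype.equivFinOfCardEq (by simp : Fintype.card ((i : ι) × Fin (c i)) = ∑ i, c i)
  refine ⟨fun j => (e.symm j).1, fun g => ?_⟩
  rw [e.symm.sum_comp (fun σ => g σ.1), Fintype.sum_sigma]
  simp

lemma exists_tuple_abs_sum_sub_le {X ι : Type*} [Fintype ι] (p : ι → X) (z₀ : X) {r : ι → ℝ}
    (hr0 : ∀ i, 0 ≤ r i) (hr1 : ∑ i, r i = 1) (N : ℕ) :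
    ∃ x : Fin N → X, ∀ (φ : X → ℝ) (D : ℝ), (∀ i, |φ z₀ - φ (p i)| ≤ D) →
      |∑ j, φ (x j) - N * ∑ i, r i * φ (p i)| ≤ Fintype.card ι * D := by
  set a : ι → ℝ := fun i => N * r i
  have ha0 : ∀ i, 0 ≤ a i := fun i => mul_nonneg N.cast_nonneg (hr0 i)
  have hfloor : ∑ i, ⌊a i⌋₊ ≤ N := by
    have : ∑ i, (⌊a i⌋₊ : ℝ) ≤ N := calc
      ∑ i, (⌊a i⌋₊ : ℝ) ≤ ∑ i, a i := Finset.sum_le_sum fun i _ => Nat.floor_le (ha0 i)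
      _ = N := by rw [← Finset.mul_sum, hr1, mul_one]
    exact_mod_cast this
  -- `⌊a i⌋₊` copies of each `p i`, and the remaining places filled with `z₀`
  let c : Option ι → ℕ := fun o => o.elim (N - ∑ i, ⌊a i⌋₊) fun i => ⌊a i⌋₊
  have hc : ∑ o, c o = N := by simp [c, Fintype.sum_option, Nat.sub_add_cancel hfloor]
  obtain ⟨ℓ, hℓ⟩ := Fintype.exists_sum_comp_eq_sum_nsmul (M := ℝ) c
  refine ⟨fun j => (ℓ (finCongr hc.symm j)).elim z₀ p, fun φ D hD => ?_⟩
  have hrest : (N : ℝ) - ∑ i, (⌊a i⌋₊ : ℝ) = ∑ i, (a i - ⌊a i⌋₊) := by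
    rw [Finset.sum_sub_distrib, ← Finset.mul_sum, hr1, mul_one]
  have key : ∑ j, φ ((ℓ (finCongr hc.symm j)).elim z₀ p) - N * ∑ i, r i * φ (p i)
      = ∑ i, (a i - ⌊a i⌋₊) * (φ z₀ - φ (p i)) := by
    rw [(finCongr hc.symm).sum_comp (fun j => φ ((ℓ j).elim z₀ p)),
      hℓ (fun o => φ (o.elim z₀ p)), Fintype.sum_option]
    simp only [c, Option.elim_none, Option.elim_some, nsmul_eq_mul, Nat.cast_sub hfloor,
      Nat.cast_sum, hrest, Finset.sum_mul, Finset.mul_sum, ← Finset.sum_add_distrib,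
      ← Finset.sum_sub_distrib]
    exact Finset.sum_congr rfl fun i _ => by ring
  rw [key]
  calc |∑ i, (a i - ⌊a i⌋₊) * (φ z₀ - φ (p i))|
      ≤ ∑ i, |(a i - ⌊a i⌋₊) * (φ z₀ - φ (p i))| := Finset.abs_sum_le_sum_abs _ _
    _ ≤ ∑ _i : ι, D := Finset.sum_le_sum fun i _ => by
        rw [abs_mul, abs_of_nonneg (sub_nonneg.2 (Nat.floor_le (ha0 i)))]
        refine (mul_le_of_le_one_left (abs_nonneg _) ?_).trans (hD i)
        linarith [Nat.lt_floor_add_one (a i)]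
    _ = Fintype.card ι * D := by simp

lemma integral_empMeasure {X : Type*} [MeasurableSpace X] [MeasurableSingletonClass X] {M : ℕ}
    (x : Fin M → X) (φ : X → ℝ) : ∫ z, φ z ∂(empMeasure x) = (M : ℝ)⁻¹ * ∑ j, φ (x j) := by
  rw [empMeasure, integral_smul_measure,
    integral_finsetSum_measure fun j _ => integrable_dirac enorm_lt_top]
  simp [integral_dirac]

lemma integral_comp_eq_sum_measureReal {Ω ι : Type*} [MeasurableSpace Ω] [Fintype ι]
    [MeasurableSpace ι] [DiscreteMeasurableSpace ι] (μ : Measure Ω) [IsFiniteMeasure μ]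
    {T : Ω → ι} (hT : Measurable T) (g : ι → ℝ) :
    ∫ z, g (T z) ∂μ = ∑ i, μ.real (T ⁻¹' {i}) * g i := by
  rw [← integral_map hT.aemeasurable (.of_discrete), integral_fintype .of_finite]
  simp [map_measureReal_apply hT (.of_discrete)]

section HilbertSpace

lemma exists_strongDual_comp_eq {V W : Type*} [AddCommGroup V] [Module ℝ V]
    [SeminormedAddCommGroup W] [NormedSpace ℝ W] (Ψ : V →ₗ[ℝ] W) (L : V →ₗ[ℝ] ℝ) (B : ℝ)
    (h : ∀ v, |L v| ≤ B * ‖Ψ v‖) : ∃ ℓ : StrongDual ℝ W, ∀ v, ℓ (Ψ v) = L v := by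
  have hker : LinearMap.ker Ψ ≤ LinearMap.ker L := fun v hv => by
    have hv' := h v
    rw [LinearMap.mem_ker.1 hv, norm_zero, mul_zero] at hv'
    exact LinearMap.mem_ker.2 (abs_nonpos_iff.1 hv')
  let L' : LinearMap.range Ψ →ₗ[ℝ] ℝ :=
    (LinearMap.ker Ψ).liftQ L hker ∘ₗ Ψ.quotKerEquivRange.symm.toLinearMap
  have hL' : ∀ v, L' ⟨Ψ v, LinearMap.mem_range_self Ψ v⟩ = L v := fun v => by
    simp [L', LinearMap.quotKerEquivRange_symm_apply_image]
  have hbound : ∀ w, ‖L' w‖ ≤ B * ‖w‖ := by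
    rintro ⟨_, v, rfl⟩
    rw [Real.norm_eq_abs, hL']
    exact h v
  obtain ⟨ℓ, hℓ, -⟩ := exists_extension_norm_eq _ (L'.mkContinuous B hbound)
  exact ⟨ℓ, fun v => (hℓ ⟨Ψ v, _⟩).trans (hL' v)⟩

variable {γ ι H : Type*} {E : γ → Type*} [∀ M, NormedAddCommGroup (E M)]
  [∀ M, InnerProductSpace ℝ (E M)] [NormedAddCommGroup H] [InnerProductSpace ℝ H] {l : Filter γ}

lemma tendsto_norm_sum_smul_of_tendsto_inner {u : ∀ M, ι → E M} {w : ι → H}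
    (h : ∀ i j, Tendsto (fun M => ⟪u M i, u M j⟫) l (𝓝 ⟪w i, w j⟫)) (s : Finset ι) (c : ι → ℝ) :
    Tendsto (fun M => ‖∑ i ∈ s, c i • u M i‖) l (𝓝 ‖∑ i ∈ s, c i • w i‖) := by
  simp only [norm_eq_sqrt_real_inner, sum_inner, inner_sum, real_inner_smul_left,
    real_inner_smul_right]
  exact (Real.continuous_sqrt.tendsto _).comp (tendsto_finsetSum _ fun i _ =>
    tendsto_finsetSum _ fun j _ => ((h j i).const_mul _).const_mul _)

theorem exists_inner_eq_of_tendsto_inner [CompleteSpace H] [l.NeBot] (u : ∀ M, ι → E M)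
    (w : ι → H) (hgram : ∀ i j, Tendsto (fun M => ⟪u M i, u M j⟫) l (𝓝 ⟪w i, w j⟫))
    {f : ∀ M, E M} {B : ℝ} (hf : ∀ M, ‖f M‖ ≤ B) {a : ι → ℝ}
    (ha : ∀ i, Tendsto (fun M => ⟪f M, u M i⟫) l (𝓝 (a i))) :
    ∃ g : H, ∀ i, ⟪g, w i⟫ = a i := by
  have hbound : ∀ c : ι →₀ ℝ,
      |Finsupp.linearCombination ℝ a c| ≤ B * ‖Finsupp.linearCombination ℝ w c‖ := fun c => by
    simp only [Finsupp.linearCombination_apply, Finsupp.sum, smul_eq_mul]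
    have hlim : Tendsto (fun M => ⟪f M, ∑ i ∈ c.support, c i • u M i⟫) l
        (𝓝 (∑ i ∈ c.support, c i * a i)) := by
      simp only [inner_sum, real_inner_smul_right]
      exact tendsto_finsetSum _ fun i _ => (ha i).const_mul _
    refine le_of_tendsto_of_tendsto' hlim.abs
      ((tendsto_norm_sum_smul_of_tendsto_inner hgram _ _).const_mul B) fun M => ?_
    exact (abs_real_inner_le_norm _ _).trans (mul_le_mul_of_nonneg_right (hf M) (norm_nonneg _))
  obtain ⟨ℓ, hℓ⟩ := exists_strongDual_comp_eq _ _ B hbound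
  refine ⟨(InnerProductSpace.toDual ℝ H).symm ℓ, fun i => ?_⟩
  simpa [InnerProductSpace.toDual_symm_apply] using hℓ (Finsupp.single i 1)

end HilbertSpace

lemma dKR_le {X : Type*} [MeasurableSpace X] [MetricSpace X] {μ ν : Measure X} {r : ℝ}
    (h : ∀ φ : X → ℝ, LipschitzWith 1 φ → ∫ x, φ x ∂μ - ∫ x, φ x ∂ν ≤ r) : dKR μ ν ≤ r :=
  haveI : Nonempty {f : X → ℝ // LipschitzWith 1 f} := ⟨⟨_, LipschitzWith.const' 0⟩⟩
  ciSup_le fun φ => h φ.1 φ.2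

section KantorovichRubinstein

variable {X : Type*} [MetricSpace X] [CompactSpace X]

lemma LipschitzWith.abs_sub_le_diam {φ : X → ℝ} (hφ : LipschitzWith 1 φ) (x y : X) :
    |φ x - φ y| ≤ diam (univ : Set X) := by
  simpa [Real.dist_eq] using (hφ.dist_le_mul x y).trans
    (by simpa using dist_le_diam_of_mem isCompact_univ.isBounded (mem_univ x) (mem_univ y))

variable [MeasurableSpace X] [BorelSpace X]

lemma LipschitzWith.integrable_of_compactSpace {K : ℝ≥0} {φ : X → ℝ} (hφ : LipschitzWith K φ)
    (μ : Measure X) [IsFiniteMeasure μ] : Integrable φ μ :=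
  hφ.continuous.integrable_of_hasCompactSupport (.of_compactSpace φ)

lemma abs_integral_sub_le_diam (μ : Measure X) [IsProbabilityMeasure μ] {φ : X → ℝ}
    (hφ : LipschitzWith 1 φ) (z₀ : X) : |∫ z, φ z ∂μ - φ z₀| ≤ diam (univ : Set X) := by
  have h := norm_integral_le_of_norm_le_const (μ := μ) (f := fun z => φ z - φ z₀)
    (.of_forall fun z => hφ.abs_sub_le_diam z z₀)
  rwa [integral_sub (hφ.integrable_of_compactSpace μ) (integrable_const _), integral_const,
    probReal_univ, one_smul, mul_one] at h

lemma dKR_bddAbove (μ ν : Measure X) [IsProbabilityMeasure μ] [IsProbabilityMeasure ν] :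
    BddAbove (range fun φ : {f : X → ℝ // LipschitzWith 1 f} =>
      ∫ x, φ.1 x ∂μ - ∫ x, φ.1 x ∂ν) := by
  obtain ⟨z₀⟩ := nonempty_of_isProbabilityMeasure μ
  refine ⟨2 * diam (univ : Set X), ?_⟩
  rintro _ ⟨φ, rfl⟩
  have hμ := abs_le.1 (abs_integral_sub_le_diam μ φ.2 z₀)
  have hν := abs_le.1 (abs_integral_sub_le_diam ν φ.2 z₀)
  dsimp only
  linarith [hμ.2, hν.1]

variable (μ ν : Measure X) [IsProbabilityMeasure μ] [IsProbabilityMeasure ν]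

lemma integral_sub_integral_le_dKR {φ : X → ℝ} (hφ : LipschitzWith 1 φ) :
    ∫ x, φ x ∂μ - ∫ x, φ x ∂ν ≤ dKR μ ν :=
  le_ciSup (dKR_bddAbove μ ν) ⟨φ, hφ⟩

lemma dKR_nonneg : 0 ≤ dKR μ ν := by
  simpa using integral_sub_integral_le_dKR μ ν (LipschitzWith.const' (0 : ℝ))

lemma abs_integral_sub_le_dKR {φ : X → ℝ} (hφ : LipschitzWith 1 φ) :
    |∫ x, φ x ∂μ - ∫ x, φ x ∂ν| ≤ dKR μ ν := by
  have h := integral_sub_integral_le_dKR μ ν hφ.neg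
  simp only [Pi.neg_apply, integral_neg] at h
  exact abs_le.2 ⟨by linarith, integral_sub_integral_le_dKR μ ν hφ⟩

lemma abs_integral_sub_le_mul_dKR {K : ℝ≥0} {φ : X → ℝ} (hφ : LipschitzWith K φ) :
    |∫ x, φ x ∂μ - ∫ x, φ x ∂ν| ≤ K * dKR μ ν := by
  rcases eq_or_ne K 0 with rfl | hK
  · obtain ⟨z₀⟩ := nonempty_of_isProbabilityMeasure μ
    have hconst : ∀ (κ : Measure X) [IsProbabilityMeasure κ], ∫ x, φ x ∂κ = φ z₀ :=
      fun κ _ => integral_eq_const (.of_forall fun x => by simpa using hφ.dist_le_mul x z₀)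
    simp [hconst]
  have hψ : LipschitzWith 1 fun x => (K : ℝ)⁻¹ • φ x := by
    have h := (lipschitzWith_smul (K : ℝ)⁻¹).comp hφ
    rwa [nnnorm_inv, NNReal.nnnorm_eq, inv_mul_cancel₀ hK] at h
  have h := abs_integral_sub_le_dKR μ ν hψ
  rwa [integral_smul, integral_smul, ← smul_sub, smul_eq_mul, abs_mul, abs_inv, NNReal.abs_eq,
    inv_mul_le_iff₀ (by positivity)] at h

end KantorovichRubinstein

section Empirical

variable {X : Type*} [MetricSpace X] [CompactSpace X] [MeasurableSpace X] [BorelSpace X]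

lemma tendsto_of_tendsto_dKR {γ : Type*} {l : Filter γ} [l.IsCountablyGenerated]
    {ν : γ → ProbabilityMeasure X} {μ : ProbabilityMeasure X}
    (h : Tendsto (fun i => dKR (ν i : Measure X) μ) l (𝓝 0)) : Tendsto ν l (𝓝 μ) := by
  refine tendsto_iff_forall_lipschitz_integral_tendsto.2 fun φ _ ⟨K, hφ⟩ =>
    tendsto_iff_norm_sub_tendsto_zero.2 ?_
  refine squeeze_zero (fun _ => norm_nonneg _) (fun i => ?_) (by simpa using h.const_mul (K : ℝ))
  exact abs_integral_sub_le_mul_dKR (ν i : Measure X) μ hφ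

lemma exists_measurable_fin_dist_lt [Nonempty X] {ρ : ℝ} (hρ : 0 < ρ) :
    ∃ (n : ℕ) (p : Fin n → X) (T : X → Fin n), Measurable T ∧ ∀ z, dist (p (T z)) z < ρ := by
  let e := TopologicalSpace.denseSeq X
  obtain ⟨t, ht⟩ := isCompact_univ.elim_finite_subcover (fun k => ball (e k) ρ)
    (fun _ => isOpen_ball) fun z _ => by
      obtain ⟨k, hk⟩ := Metric.denseRange_iff.1 (TopologicalSpace.denseRange_denseSeq X) z ρ hρ
      exact mem_iUnion.2 ⟨k, mem_ball.2 hk⟩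
  let N := t.sup id
  let T : X → Fin (N + 1) := fun z =>
    ⟨SimpleFunc.nearestPtInd e N z, Nat.lt_succ_of_le (SimpleFunc.nearestPtInd_le e N z)⟩
  refine ⟨N + 1, fun i => e i, T, measurable_to_countable' fun i => ?_, fun z => ?_⟩
  · convert (SimpleFunc.nearestPtInd e N).measurableSet_fiber i.val using 1
    ext z
    simp [T, Fin.ext_iff]
  · obtain ⟨k, hkt, hk⟩ := mem_iUnion₂.1 (ht (mem_univ z))
    have h := SimpleFunc.edist_nearestPt_le e z (Finset.le_sup (f := id) hkt)
    rw [edist_dist, edist_dist, ENNReal.ofReal_le_ofReal_iff dist_nonneg] at h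
    exact h.trans_lt (mem_ball'.1 hk)

lemma eventually_exists_dKR_empMeasure_le (μ : Measure X) [IsProbabilityMeasure μ] {ρ : ℝ}
    (hρ : 0 < ρ) : ∀ᶠ M in atTop, ∃ x : Fin (M + 1) → X, dKR (empMeasure x) μ ≤ ρ := by
  have := nonempty_of_isProbabilityMeasure μ
  obtain ⟨n, p, T, hT, hpT⟩ := exists_measurable_fin_dist_lt (X := X) (half_pos hρ)
  set r : Fin n → ℝ := fun i => μ.real (T ⁻¹' {i})
  have hr1 : ∑ i, r i = 1 := by
    simpa using (integral_comp_eq_sum_measureReal μ hT fun _ => (1 : ℝ)).symm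
  set D := diam (univ : Set X)
  have hsmall : ∀ᶠ M : ℕ in atTop, n * D / (M + 1) ≤ ρ / 2 := by
    have h := (tendsto_const_div_atTop_nhds_zero_nat (n * D : ℝ)).comp (tendsto_add_atTop_nat 1)
    simpa using h.eventually (ge_mem_nhds (half_pos hρ))
  filter_upwards [hsmall] with M hM
  obtain ⟨x, hx⟩ := exists_tuple_abs_sum_sub_le p (Classical.arbitrary X)
    (fun _ => measureReal_nonneg) hr1 (M + 1)
  refine ⟨x, dKR_le fun φ hφ => ?_⟩
  have hemp : ∫ z, φ z ∂(empMeasure x) - ∑ i, r i * φ (p i) ≤ ρ / 2 := by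
    have h := (abs_le.1 (hx φ D fun i => hφ.abs_sub_le_diam _ _)).2
    rw [Fintype.card_fin] at h
    push_cast at h
    rw [integral_empMeasure]
    push_cast
    calc ((M : ℝ) + 1)⁻¹ * ∑ j, φ (x j) - ∑ i, r i * φ (p i)
        = (∑ j, φ (x j) - (M + 1) * ∑ i, r i * φ (p i)) / (M + 1) := by field_simp
      _ ≤ n * D / (M + 1) := by gcongr
      _ ≤ ρ / 2 := hM
  have hquant : ∑ i, r i * φ (p i) - ∫ z, φ z ∂μ ≤ ρ / 2 := by
    have h := norm_integral_le_of_norm_le_const (μ := μ) (C := ρ / 2)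
      (f := fun z => φ (p (T z)) - φ z) (.of_forall fun z => by
        simpa [Real.dist_eq] using ((hφ.dist_le_mul _ _).trans_lt (by simpa using hpT z)).le)
    rw [integral_sub (f := fun z => φ (p (T z)))
      (Integrable.of_finite.comp_measurable (g := φ ∘ p) hT) (hφ.integrable_of_compactSpace μ),
      integral_comp_eq_sum_measureReal μ hT fun i => φ (p i), probReal_univ, mul_one] at h
    exact (le_abs_self _).trans h
  linarith

lemma exists_tendsto_dKR_empMeasure (μ : Measure X) [IsProbabilityMeasure μ] :
    ∃ s : ∀ M : ℕ, Fin (M + 1) → X,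
      Tendsto (fun M => dKR (empMeasure (s M)) μ) atTop (𝓝 0) :=
  have := nonempty_of_isProbabilityMeasure μ
  exists_tendsto_zero_of_eventually_exists_le _ (fun _ x => dKR_nonneg (empMeasure x) μ)
    fun _ hδ => eventually_exists_dKR_empMeasure_le μ hδ

end Empirical

lemma tendsto_kernel_of_tendsto_dKR {X : Type*} [MetricSpace X] [MeasurableSpace X]
    (kM : ∀ M : ℕ, (Fin (M + 1) → X) → (Fin (M + 1) → X) → ℝ)
    (k : ProbabilityMeasure X → ProbabilityMeasure X → ℝ) {L_k : ℝ}
    (hLipk : ∀ μ₁ μ₁' μ₂ μ₂' : ProbabilityMeasure X,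
      |k μ₁ μ₁' - k μ₂ μ₂'| ≤
        L_k * (dKR (μ₁ : Measure X) (μ₂ : Measure X) + dKR (μ₁' : Measure X) (μ₂' : Measure X)))
    (hMF : ∀ ε : ℝ, 0 < ε → ∃ M₀ : ℕ, ∀ M ≥ M₀, ∀ x x' : Fin (M + 1) → X,
      |kM M x x' - k (empProb x) (empProb x')| ≤ ε)
    {μ ν : ProbabilityMeasure X} {x x' : ∀ M, Fin (M + 1) → X}
    (hx : Tendsto (fun M => dKR (empMeasure (x M)) μ) atTop (𝓝 0))
    (hx' : Tendsto (fun M => dKR (empMeasure (x' M)) ν) atTop (𝓝 0)) :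
    Tendsto (fun M => kM M (x M) (x' M)) atTop (𝓝 (k μ ν)) := by
  have hlim : Tendsto (fun M => k (empProb (x M)) (empProb (x' M))) atTop (𝓝 (k μ ν)) :=
    tendsto_iff_norm_sub_tendsto_zero.2 <| squeeze_zero (fun _ => norm_nonneg _)
      (g := fun M => L_k * (dKR (empMeasure (x M)) μ + dKR (empMeasure (x' M)) ν))
      (fun M => hLipk _ _ μ ν) (by simpa using (hx.add hx').const_mul L_k)
  have hmf : Tendsto (fun M => kM M (x M) (x' M) - k (empProb (x M)) (empProb (x' M)))
      atTop (𝓝 0) :=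
    Metric.tendsto_atTop.2 fun δ hδ => (hMF (δ / 2) (half_pos hδ)).imp fun M₀ hM₀ M hM => by
      rw [Real.dist_eq, sub_zero]
      exact (hM₀ M hM _ _).trans_lt (half_lt_self hδ)
  simpa using hmf.add hlim

theorem mean_field_kernel_approximation_general
    {X : Type*} [MetricSpace X] [CompactSpace X]
    [MeasurableSpace X] [BorelSpace X]
    {HM : ℕ → Type*} [∀ M, NormedAddCommGroup (HM M)] [∀ M, InnerProductSpace ℝ (HM M)]
    (ΦM : ∀ M : ℕ, (Fin (M + 1) → X) → HM M)
    (kM : ∀ M : ℕ, (Fin (M + 1) → X) → (Fin (M + 1) → X) → ℝ)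
    (hkM : ∀ M x x', kM M x x' = ⟪ΦM M x, ΦM M x'⟫)
    {Hk : Type*} [NormedAddCommGroup Hk] [InnerProductSpace ℝ Hk] [CompleteSpace Hk]
    (Φ : ProbabilityMeasure X → Hk)
    (k : ProbabilityMeasure X → ProbabilityMeasure X → ℝ)
    (hkk : ∀ μ ν, k μ ν = ⟪Φ μ, Φ ν⟫)
    (L_k : ℝ)
    (hLipk : ∀ μ₁ μ₁' μ₂ μ₂' : ProbabilityMeasure X,
      |k μ₁ μ₁' - k μ₂ μ₂'| ≤
        L_k * (dKR (μ₁ : Measure X) (μ₂ : Measure X) + dKR (μ₁' : Measure X) (μ₂' : Measure X)))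
    (hMF : ∀ ε : ℝ, 0 < ε → ∃ M₀ : ℕ, ∀ M ≥ M₀, ∀ x x' : Fin (M + 1) → X,
      |kM M x x' - k (empProb x) (empProb x')| ≤ ε)
    (f : ProbabilityMeasure X → ℝ) (hf : Continuous f)
    (happrox : ∀ ε : ℝ, 0 < ε → ∃ B : ℝ, 0 ≤ B ∧
      ∃ (fM : ∀ M : ℕ, (Fin (M + 1) → X) → ℝ) (fhat : ∀ M : ℕ, HM M),
        (∀ M (σ : Equiv.Perm (Fin (M + 1))) (x : Fin (M + 1) → X), fM M (x ∘ σ) = fM M x) ∧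
        (∀ M (x : Fin (M + 1) → X), ∀ δ : ℝ, 0 < δ → ∃ ρ : ℝ, 0 < ρ ∧
          ∀ x' : Fin (M + 1) → X,
            dKR (empMeasure x') (empMeasure x) < ρ → |fM M x' - fM M x| < δ) ∧
        (∀ δ : ℝ, 0 < δ → ∃ M₀ : ℕ, ∀ M ≥ M₀, ∀ x : Fin (M + 1) → X,
          |fM M x - f (empProb x)| ≤ δ) ∧
        (∀ M (x : Fin (M + 1) → X), |fM M x - ⟪fhat M, ΦM M x⟫| ≤ ε) ∧
        (∀ M, ‖fhat M‖ ≤ B)) :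
    ∀ ε : ℝ, 0 < ε → ∃ g : Hk, ∀ μ : ProbabilityMeasure X, |f μ - ⟪g, Φ μ⟫| ≤ ε := by
  intro ε hε
  obtain ⟨B, -, fM, fhat, -, -, hfM, hfit, hnorm⟩ := happrox ε hε
  choose s hs using fun μ : ProbabilityMeasure X => exists_tendsto_dKR_empMeasure (μ : Measure X)
  let U := hyperfilter ℕ
  have hUat : (U : Filter ℕ) ≤ atTop := Nat.hyperfilter_le_atTop
  have hlim : ∀ μ, ∃ a, Tendsto (fun M => ⟪fhat M, ΦM M (s μ M)⟫) U (𝓝 a) ∧ |a - f μ| ≤ ε :=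
    fun μ => exists_tendsto_ultrafilter_abs_sub_le hUat
      ((hf.tendsto μ).comp (tendsto_of_tendsto_dKR (ν := fun M => empProb (s μ M)) (hs μ)))
      fun δ hδ => by
        obtain ⟨M₀, hM₀⟩ := hfM δ hδ
        filter_upwards [eventually_ge_atTop M₀] with M hM
        exact (abs_sub_le _ (fM M (s μ M)) _).trans
          (add_le_add ((abs_sub_comm _ _).trans_le (hfit M _)) (hM₀ M hM _))
  choose a ha hfa using hlim
  obtain ⟨g, hg⟩ := exists_inner_eq_of_tendsto_inner (l := U) (fun M μ => ΦM M (s μ M)) Φ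
    (fun μ ν => by simpa only [hkM, hkk] using
      (tendsto_kernel_of_tendsto_dKR kM k hLipk hMF (hs μ) (hs ν)).mono_left hUat) hnorm ha
  exact ⟨g, fun μ => by rw [hg, abs_sub_comm]; exact hfa μ⟩

/-- Approximation power of the mean field limit kernel. If a continuous
`f : P(X) → ℝ` is such that for every `ε > 0` there are `B ≥ 0` and sequences `f_M`
(symmetric, continuous w.r.t. the pseudometric `(x,x') ↦ d_KR(μ̂[x],μ̂[x'])`) and
`f̂_M ∈ H_{k_M}` with `f_M → f` in mean field, `‖f_M − f̂_M‖_∞ ≤ ε` and `‖f̂_M‖ ≤ B`,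
then for every `ε > 0` there is `f̂ ∈ H_k` (represented by `g`) with `‖f − f̂‖_∞ ≤ ε`. -/
theorem mean_field_kernel_approximation
    {X : Type*} [MetricSpace X] [CompactSpace X] [Nonempty X]
    [MeasurableSpace X] [BorelSpace X]
    {HM : ℕ → Type*} [∀ M, NormedAddCommGroup (HM M)] [∀ M, InnerProductSpace ℝ (HM M)]
    [∀ M, CompleteSpace (HM M)]
    (ΦM : ∀ M : ℕ, (Fin (M + 1) → X) → HM M)
    (kM : ∀ M : ℕ, (Fin (M + 1) → X) → (Fin (M + 1) → X) → ℝ)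
    (hkM : ∀ M x x', kM M x x' = ⟪ΦM M x, ΦM M x'⟫)
    (hsymM : ∀ M (σ : Equiv.Perm (Fin (M + 1))) (x x' : Fin (M + 1) → X),
      kM M (x ∘ σ) x' = kM M x x')
    {Hk : Type*} [NormedAddCommGroup Hk] [InnerProductSpace ℝ Hk] [CompleteSpace Hk]
    (Φ : ProbabilityMeasure X → Hk)
    (k : ProbabilityMeasure X → ProbabilityMeasure X → ℝ)
    (hkk : ∀ μ ν, k μ ν = ⟪Φ μ, Φ ν⟫)
    (hdense : Dense (Submodule.span ℝ (Set.range Φ) : Set Hk))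
    (C_k L_k : ℝ)
    (hbdM : ∀ M x x', |kM M x x'| ≤ C_k)
    (hbdk : ∀ μ ν, |k μ ν| ≤ C_k)
    (hLipM : ∀ M (x₁ x₁' x₂ x₂' : Fin (M + 1) → X),
      |kM M x₁ x₁' - kM M x₂ x₂'| ≤
        L_k * (dKR (empMeasure x₁) (empMeasure x₂) + dKR (empMeasure x₁') (empMeasure x₂')))
    (hLipk : ∀ μ₁ μ₁' μ₂ μ₂' : ProbabilityMeasure X,
      |k μ₁ μ₁' - k μ₂ μ₂'| ≤
        L_k * (dKR (μ₁ : Measure X) (μ₂ : Measure X) + dKR (μ₁' : Measure X) (μ₂' : Measure X)))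
    (hMF : ∀ ε : ℝ, 0 < ε → ∃ M₀ : ℕ, ∀ M ≥ M₀, ∀ x x' : Fin (M + 1) → X,
      |kM M x x' - k (empProb x) (empProb x')| ≤ ε)
    (f : ProbabilityMeasure X → ℝ) (hf : Continuous f)
    (happrox : ∀ ε : ℝ, 0 < ε → ∃ B : ℝ, 0 ≤ B ∧
      ∃ (fM : ∀ M : ℕ, (Fin (M + 1) → X) → ℝ) (fhat : ∀ M : ℕ, HM M),
        (∀ M (σ : Equiv.Perm (Fin (M + 1))) (x : Fin (M + 1) → X), fM M (x ∘ σ) = fM M x) ∧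
        (∀ M (x : Fin (M + 1) → X), ∀ δ : ℝ, 0 < δ → ∃ ρ : ℝ, 0 < ρ ∧
          ∀ x' : Fin (M + 1) → X,
            dKR (empMeasure x') (empMeasure x) < ρ → |fM M x' - fM M x| < δ) ∧
        (∀ δ : ℝ, 0 < δ → ∃ M₀ : ℕ, ∀ M ≥ M₀, ∀ x : Fin (M + 1) → X,
          |fM M x - f (empProb x)| ≤ δ) ∧
        (∀ M (x : Fin (M + 1) → X), |fM M x - ⟪fhat M, ΦM M x⟫| ≤ ε) ∧
        (∀ M, ‖fhat M‖ ≤ B)) :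
    ∀ ε : ℝ, 0 < ε → ∃ g : Hk, ∀ μ : ProbabilityMeasure X, |f μ - ⟪g, Φ μ⟫| ≤ ε :=
  mean_field_kernel_approximation_general ΦM kM hkM Φ k hkk L_k hLipk hMF f hf happrox
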